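/- arXiv:1306.2930 — 3 statements merged into one kernel-verified Lean document; each statement's English description precedes it below -/
import Mathlib

section
/- For a connected graph G with vertex set {v_1,...,v_n} and sink v_n, if {U, W} is a cut with v_n ∈ W and the cut is not connected (i.e., G[U] or G[W] is disconnected), then there exists a connected cut {U', W'} with v_n ∈ W' such that the monomial x^{C'} divides x^{C}, where for a cut C = {U,W} with v_n ∈ W, x^C = ∏_{u ∈ U} x_u^{d_U(u)} and d_U(u) is the number of edges from u to vertices outside U. Consequently, the G-parking function ideal I is generated by the monomials x^C for C ranging over connected cuts. -/
/-!
Let `W` be the component of the sink in `G[Uᶜ]` and `U'` the component of a vertex of `U` in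
`G[Wᶜ]`. Then `G[U']` is connected, and so is `G[U'ᶜ]`, because every other component of `G[Wᶜ]`
has an edge into the connected set `W`. Every edge leaving `U'` runs from a vertex of `U` into
`W ⊆ Uᶜ`, so `d_{U'}(u) ≤ d_U(u)` for all `u ∈ U'` and `x^{C'} ∣ x^C`. Hence every cut monomial
is a multiple of a connected-cut monomial, which gives the description of the ideal.
-/

open SimpleGraph
open scoped Classical

/-- A loopless multigraph on vertex type `V` with edge labels `E`. -/
structure MG (V : Type*) (E : Type*) where
  ends : E → Sym2 V
  no_loop : ∀ e, ¬ (ends e).IsDiag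

variable {V E : Type*} [Fintype V] [DecidableEq V] [Fintype E]

/-- The underlying adjacency (simple) graph of a multigraph. -/
def MG.adjGraph (G : MG V E) : SimpleGraph V :=
  SimpleGraph.fromRel (fun u v => ∃ e, G.ends e = s(u, v))

/-- `π` is a connected partition: every block induces a connected subgraph. -/
def ConnPart (H : SimpleGraph V) (π : Setoid V) : Prop :=
  ∀ c ∈ π.classes, (H.induce c).Connected

/-- `d_U(u)`: the number of edges joining `u` to a vertex outside `U`. -/
noncomputable def dU (G : MG V E) (U : Set V) (u : V) : ℕ :=
  Nat.card {e : E // ∃ w, w ∉ U ∧ G.ends e = s(u, w)}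

/-- `{U, Uᶜ}` is a connected cut: both sides induce connected subgraphs. -/
def ConnCut (G : MG V E) (U : Set V) : Prop :=
  (G.adjGraph.induce U).Connected ∧ (G.adjGraph.induce Uᶜ).Connected

/-- The monomial `x^C = ∏_{u ∈ U} x_u^{d_U(u)}` attached to the cut
`C = {U, Uᶜ}` with sink `s ∈ Uᶜ`, in `k[x_u : u ≠ s]`. -/
noncomputable def xC (k : Type*) [Field k] (G : MG V E) (s : V) (U : Set V) :
    MvPolynomial {v : V // v ≠ s} k :=
  MvPolynomial.monomial
    (Finsupp.equivFunOnFinite.symm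
      fun u : {v : V // v ≠ s} => if (u : V) ∈ U then dU G U u else 0) 1

/-- The `G`-parking function ideal: generated by `x^C` for `C` a connected cut. -/
noncomputable def parkIdeal (k : Type*) [Field k] (G : MG V E) (s : V) :
    Ideal (MvPolynomial {v : V // v ≠ s} k) :=
  Ideal.span {p | ∃ U : Set V, s ∉ U ∧ ConnCut G U ∧ p = xC k G s U}

namespace SimpleGraph

variable {α : Type*} {H : SimpleGraph α} {S T K C : Set α} {a b : α}

def IsInducedComponent (H : SimpleGraph α) (S T : Set α) : Prop :=
  Maximal (fun T => T ⊆ S ∧ (H.induce T).Connected) T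

namespace IsInducedComponent

lemma subset (hT : H.IsInducedComponent S T) : T ⊆ S := hT.1.1

lemma connected (hT : H.IsInducedComponent S T) : (H.induce T).Connected := hT.1.2

lemma mem_of_adj (hT : H.IsInducedComponent S T) (ha : a ∈ T) (hb : b ∈ S) (hab : H.Adj a b) :
    b ∈ T := by
  have hconn : (H.induce (T ∪ {b})).Connected :=
    connected_induce_union hT.connected.preconnected (by simp [Preconnected]) ha rfl hab
  exact hT.2 ⟨Set.union_subset hT.subset (Set.singleton_subset_iff.2 hb), hconn⟩
    Set.subset_union_left (Or.inr rfl)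

lemma disjoint_of_mem_of_notMem (hT : H.IsInducedComponent S T) (hK : H.IsInducedComponent S K)
    (ha : a ∈ T) (haK : a ∉ K) : Disjoint T K := by
  refine Set.disjoint_left.2 fun x hxT hxK => haK ?_
  have hconn : (H.induce (K ∪ T)).Connected :=
    induce_union_connected hK.connected.preconnected hT.connected.preconnected ⟨x, hxK, hxT⟩
  exact hK.2 ⟨Set.union_subset hK.subset hT.subset, hconn⟩ Set.subset_union_left (Or.inr ha)

end IsInducedComponent

lemma exists_isInducedComponent [Finite α] (ha : a ∈ S) :
    ∃ T, a ∈ T ∧ H.IsInducedComponent S T := by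
  have hsingle : {a} ⊆ S ∧ (H.induce {a}).Connected := by
    refine ⟨Set.singleton_subset_iff.2 ha, ?_⟩
    rw [induce_singleton_eq_top]
    exact connected_top
  obtain ⟨T, haT, hT⟩ :=
    Finite.exists_le_maximal (p := fun T : Set α => T ⊆ S ∧ (H.induce T).Connected) hsingle
  exact ⟨T, haT rfl, hT⟩

lemma Connected.exists_adj_of_mem_of_notMem (hH : H.Connected) (ha : a ∈ T) (hb : b ∉ T) :
    ∃ x ∈ T, ∃ y ∉ T, H.Adj x y := by
  obtain ⟨d, -, hd, hd'⟩ := (hH.preconnected a b).some.exists_boundary_dart T ha hb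
  exact ⟨d.fst, hd, d.snd, hd', d.adj⟩

/-- Every other component of `H[Cᶜ]` is attached to `C` by an edge. -/
lemma Connected.induce_compl_of_isInducedComponent [Finite α] (hH : H.Connected)
    (hC : (H.induce C).Connected) (hK : H.IsInducedComponent Cᶜ K) :
    (H.induce Kᶜ).Connected := by
  obtain ⟨⟨c, hc⟩⟩ := hC.nonempty
  have hCK : C ⊆ Kᶜ := fun x hx hxK => hK.subset hxK hx
  refine induce_connected_of_patches c (hCK hc) fun {v} hv => ?_
  by_cases hvC : v ∈ C
  · exact ⟨C, hCK, hc, hvC, hC.preconnected _ _⟩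
  obtain ⟨T, hvT, hT⟩ := exists_isInducedComponent (H := H) (show v ∈ Cᶜ from hvC)
  obtain ⟨x, hxT, y, hyT, hxy⟩ := hH.exists_adj_of_mem_of_notMem hvT fun hcT => hT.subset hcT hc
  have hyC : y ∈ C := by
    by_contra hyC
    exact hyT (hT.mem_of_adj hxT hyC hxy)
  have hTK : T ⊆ Kᶜ := Set.disjoint_left.1 (hT.disjoint_of_mem_of_notMem hK hvT hv)
  have hconn : (H.induce (C ∪ T)).Connected :=
    connected_induce_union hC.preconnected hT.connected.preconnected hyC hxT hxy.symm
  exact ⟨C ∪ T, Set.union_subset hCK hTK, Or.inl hc, Or.inr hvT, hconn.preconnected _ _⟩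

lemma Connected.exists_connected_cut_edges_subset [Finite α] (hH : H.Connected) {U : Set α}
    {s : α} (hU : U.Nonempty) (hs : s ∉ U) :
    ∃ U', s ∉ U' ∧ (H.induce U').Connected ∧ (H.induce U'ᶜ).Connected ∧
      ∀ u ∈ U', ∀ w ∉ U', H.Adj u w → u ∈ U ∧ w ∉ U := by
  obtain ⟨u₀, hu₀⟩ := hU
  obtain ⟨W, hsW, hW⟩ := exists_isInducedComponent (H := H) (show s ∈ Uᶜ from hs)
  have hu₀W : u₀ ∈ Wᶜ := fun h => hW.subset h hu₀
  obtain ⟨U', hu₀U', hU'⟩ := exists_isInducedComponent (H := H) hu₀W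
  refine ⟨U', fun h => hU'.subset h hsW, hU'.connected,
    hH.induce_compl_of_isInducedComponent hW.connected hU', fun u hu w hw huw => ?_⟩
  have hwW : w ∈ W := by
    by_contra hwW
    exact hw (hU'.mem_of_adj hu hwW huw)
  refine ⟨?_, hW.subset hwW⟩
  by_contra huU
  exact hU'.subset hu (hW.mem_of_adj hwW huU huw.symm)

end SimpleGraph

section

variable {V E : Type*}

lemma MG.adjGraph_adj_of_ends {G : MG V E} {e : E} {u w : V} (he : G.ends e = s(u, w)) :
    G.adjGraph.Adj u w := by
  rw [MG.adjGraph, SimpleGraph.fromRel_adj]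
  exact ⟨fun h => G.no_loop e (he ▸ Sym2.mk_isDiag_iff.2 h), Or.inl ⟨e, he⟩⟩

lemma dU_le_dU [Finite E] {G : MG V E} {A B : Set V} {u : V}
    (h : ∀ w ∉ A, G.adjGraph.Adj u w → w ∉ B) : dU G A u ≤ dU G B u :=
  Nat.card_mono (Set.toFinite _) fun _ ⟨w, hw, he⟩ =>
    ⟨w, h w hw (MG.adjGraph_adj_of_ends he), he⟩

lemma dU_eq_zero {G : MG V E} {A : Set V} {u : V}
    (h : ∀ w ∉ A, ¬ G.adjGraph.Adj u w) : dU G A u = 0 := by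
  rw [dU, Nat.card_eq_zero]
  exact Or.inl ⟨fun ⟨_, w, hw, he⟩ => h w hw (MG.adjGraph_adj_of_ends he)⟩

variable [Fintype V] [Finite E] (k : Type*) [Field k] (G : MG V E) (s : V)

lemma xC_dvd_xC {A B : Set V} (h : ∀ u ∈ A, ∀ w ∉ A, G.adjGraph.Adj u w → u ∈ B ∧ w ∉ B) :
    xC k G s A ∣ xC k G s B := by
  rw [xC, xC, MvPolynomial.monomial_dvd_monomial]
  refine ⟨Or.inr fun u => ?_, dvd_rfl⟩
  simp only [Finsupp.coe_equivFunOnFinite_symm]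
  split_ifs with huA huB
  · exact dU_le_dU fun w hw huw => (h u huA w hw huw).2
  · exact (dU_eq_zero fun w hw huw => huB (h u huA w hw huw).1).le
  all_goals exact Nat.zero_le _

lemma exists_connCut_xC_dvd (hG : G.adjGraph.Connected) {U : Set V} (hU : U.Nonempty)
    (hsU : s ∉ U) : ∃ U' : Set V, s ∉ U' ∧ ConnCut G U' ∧ xC k G s U' ∣ xC k G s U := by
  obtain ⟨U', hsU', hconn, hconn', hcut⟩ := hG.exists_connected_cut_edges_subset hU hsU
  exact ⟨U', hsU', ⟨hconn, hconn'⟩, xC_dvd_xC k G s hcut⟩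

end

theorem stmt_7_general (k : Type*) [Field k] (G : MG V E) (hG : G.adjGraph.Connected)
    (s : V) (U : Set V) (hU : U.Nonempty) (hsU : s ∉ U) :
    (∃ U' : Set V, s ∉ U' ∧ ConnCut G U' ∧ xC k G s U' ∣ xC k G s U) ∧
    parkIdeal k G s =
      Ideal.span {p | ∃ W : Set V, W.Nonempty ∧ s ∉ W ∧ p = xC k G s W} := by
  refine ⟨exists_connCut_xC_dvd k G s hG hU hsU, le_antisymm ?_ ?_⟩
  · refine Ideal.span_mono ?_
    rintro _ ⟨W, hsW, hW, rfl⟩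
    exact ⟨W, Set.nonempty_coe_sort.1 hW.1.nonempty, hsW, rfl⟩
  · rw [Ideal.span_le]
    rintro _ ⟨W, hW, hsW, rfl⟩
    obtain ⟨U', hsU', hU', hdvd⟩ := exists_connCut_xC_dvd k G s hG hW hsW
    exact Ideal.mem_of_dvd _ hdvd (Ideal.subset_span ⟨U', hsU', hU', rfl⟩)

/-- If `{U, Uᶜ}` (with sink `s ∉ U`) is a cut which is not connected, then some
connected cut's monomial `x^{C'}` divides `x^C`; consequently the `G`-parking
function ideal (generated by the connected-cut monomials) coincides with the
ideal generated by the monomials of all cuts. -/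
theorem stmt_7 (k : Type*) [Field k] (G : MG V E) (hG : G.adjGraph.Connected)
    (s : V) (U : Set V) (hU : U.Nonempty) (hsU : s ∉ U) (hnc : ¬ ConnCut G U) :
    (∃ U' : Set V, s ∉ U' ∧ ConnCut G U' ∧ xC k G s U' ∣ xC k G s U) ∧
    parkIdeal k G s =
      Ideal.span {p | ∃ W : Set V, W.Nonempty ∧ s ∉ W ∧ p = xC k G s W} :=
  stmt_7_general k G hG s U hU hsU
end

section
/- The monomials x^C, as C ranges over the connected cuts of a connected graph G with sink v_n, are exactly the minimal monomial generators of the G-parking function ideal I: no x^C properly divides another x^{C'} for distinct connected cuts C, C'. -/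
open SimpleGraph
open scoped Classical

variable {V E : Type*} [Fintype V] [DecidableEq V] [Fintype E]

lemma adj_exists_edge (G : MG V E) {x y : V} (h : G.adjGraph.Adj x y) :
    ∃ e, G.ends e = s(x, y) := by
  rcases h with ⟨hne, h | h⟩
  · exact h
  · rcases h with ⟨e, he⟩
    exact ⟨e, by rw [he, Sym2.eq_swap]⟩

lemma dU_pos (G : MG V E) {U : Set V} {x y : V} (hy : y ∉ U)
    (h : ∃ e, G.ends e = s(x, y)) : 0 < dU G U x := by
  rcases h with ⟨e, he⟩
  have : Nonempty {e : E // ∃ w, w ∉ U ∧ G.ends e = s(x, w)} := ⟨⟨e, y, hy, he⟩⟩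
  exact Nat.card_pos

lemma dU_lt (G : MG V E) {U U' : Set V} (hUU' : U ⊆ U') {x y : V}
    (hx : x ∈ U) (hy : y ∈ U') (hyU : y ∉ U) (e₀ : E) (he₀ : G.ends e₀ = s(x, y)) :
    dU G U' x < dU G U x := by
  have hxy : x ≠ y := fun h => hyU (h ▸ hx)
  have hsub : {e : E | ∃ w, w ∉ U' ∧ G.ends e = s(x, w)} ⊂
      {e : E | ∃ w, w ∉ U ∧ G.ends e = s(x, w)} := by
    constructor
    · rintro e ⟨w, hw, hwe⟩
      exact ⟨w, fun h => hw (hUU' h), hwe⟩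
    · intro h
      have he₀mem : e₀ ∈ {e : E | ∃ w, w ∉ U ∧ G.ends e = s(x, w)} := ⟨y, hyU, he₀⟩
      rcases h he₀mem with ⟨w, hw, hwe⟩
      rw [he₀] at hwe
      rcases Sym2.eq_iff.mp hwe with ⟨-, h1⟩ | ⟨-, h1⟩
      · exact hw (h1 ▸ hy)
      · exact hxy h1.symm
  have h1 : dU G U' x = {e : E | ∃ w, w ∉ U' ∧ G.ends e = s(x, w)}.ncard :=
    Nat.card_coe_set_eq _
  have h2 : dU G U x = {e : E | ∃ w, w ∉ U ∧ G.ends e = s(x, w)}.ncard :=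
    Nat.card_coe_set_eq _
  rw [h1, h2]
  exact Set.ncard_lt_ncard hsub (Set.toFinite _)

/-- The monomials `x^C` of connected cuts are the minimal generators of the
`G`-parking function ideal: none properly divides another. -/
theorem stmt_9 (k : Type*) [Field k] (G : MG V E) (hG : G.adjGraph.Connected)
    (s : V) (U U' : Set V) (hsU : s ∉ U) (hsU' : s ∉ U')
    (hc : ConnCut G U) (hc' : ConnCut G U')
    (hdvd : xC k G s U ∣ xC k G s U') : xC k G s U = xC k G s U' := by
  -- Extract pointwise exponent inequality
  unfold xC at hdvd
  rw [MvPolynomial.monomial_dvd_monomial] at hdvd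
  have hle0 := hdvd.1.resolve_left one_ne_zero
  have hle : ∀ u : {v : V // v ≠ s},
      (if (u : V) ∈ U then dU G U u else 0) ≤
      (if (u : V) ∈ U' then dU G U' u else 0) := by
    intro u
    have := Finsupp.le_def.mp hle0 u
    simpa using this
  have hle' : ∀ (x : V), x ≠ s →
      (if x ∈ U then dU G U x else 0) ≤ (if x ∈ U' then dU G U' x else 0) :=
    fun x hx => hle ⟨x, hx⟩
  -- Step 1 : U ⊆ U'
  have hsub : U ⊆ U' := by
    intro b hb
    by_contra hb'
    have hbU'c : b ∈ U'ᶜ := hb'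
    have hsU'c : s ∈ U'ᶜ := hsU'
    obtain ⟨p⟩ := (hc'.2.preconnected ⟨b, hbU'c⟩ ⟨s, hsU'c⟩)
    obtain ⟨d, _, hdf, hds⟩ := p.exists_boundary_dart
      {x : ↥(U'ᶜ) | (x : V) ∈ U} hb hsU
    have hadj : G.adjGraph.Adj (d.fst : V) (d.snd : V) := d.adj
    have hepos : 0 < dU G U (d.fst : V) :=
      dU_pos G hds (adj_exists_edge G hadj)
    have hxs : (d.fst : V) ≠ s := fun h => hsU (h ▸ hdf)
    have := hle' (d.fst : V) hxs
    rw [if_pos (show ((d.fst : ↥(U'ᶜ)) : V) ∈ U from hdf), if_neg (show ¬ ((d.fst : ↥(U'ᶜ)) : V) ∈ U' from (d.fst).2)] at this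
    omega
  -- Step 2 : U = U'
  by_cases heq : U = U'
  · rw [heq]
  · exfalso
    obtain ⟨b, hbU', hbU⟩ := Set.exists_of_ssubset ⟨hsub, fun h => heq (le_antisymm hsub h)⟩
    obtain ⟨a⟩ := hc.1.nonempty
    obtain ⟨p⟩ := (hc'.1.preconnected ⟨b, hbU'⟩ ⟨(a : V), hsub a.2⟩)
    obtain ⟨d, _, hdf, hds⟩ := p.exists_boundary_dart
      {x : ↥U' | (x : V) ∉ U} hbU (not_not.mpr a.2)
    have hadj : G.adjGraph.Adj (d.fst : V) (d.snd : V) := d.adj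
    obtain ⟨e₀, he₀⟩ := adj_exists_edge G hadj
    have hxU : (d.snd : V) ∈ U := not_not.mp hds
    have hlt : dU G U' (d.snd : V) < dU G U (d.snd : V) :=
      dU_lt G hsub hxU (d.fst).2 hdf e₀ (by rw [he₀, Sym2.eq_swap])
    have hxs : (d.snd : V) ≠ s := fun h => hsU (h ▸ hxU)
    have := hle' (d.snd : V) hxs
    rw [if_pos hxU, if_pos (hsub hxU)] at this
    omega
end

section
/- For any graph G, the number of G-parking functions and the number of maximal G-parking functions are independent of the choice of sink vertex. -/
open SimpleGraph
open scoped Classical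

variable {V E : Type*} [Fintype V] [DecidableEq V] [Fintype E]

def IsParking (G : MG V E) (s : V) (c : {v : V // v ≠ s} → ℕ) : Prop :=
  ∀ U : Set V, U.Nonempty → s ∉ U →
    ∃ u, ∃ hu : u ∈ U, ∃ h : u ≠ s, c ⟨u, h⟩ < dU G U u

def IsMaxParking (G : MG V E) (s : V) (c : {v : V // v ≠ s} → ℕ) : Prop :=
  IsParking G s c ∧ ∀ c', IsParking G s c' → c ≤ c' → c' = c
namespace PFAux

open Finset

variable {V E : Type*} [Fintype V] [DecidableEq V] [Fintype E]

/-- Edge multiplicity between two vertices. -/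
noncomputable def mult (G : MG V E) (u v : V) : ℕ :=
  (Finset.univ.filter fun e => G.ends e = s(u, v)).card

lemma mult_comm (G : MG V E) (u v : V) : mult G u v = mult G v u := by
  unfold mult
  congr 1
  ext e
  simp [Sym2.eq_swap]

lemma mult_self (G : MG V E) (u : V) : mult G u u = 0 := by
  unfold mult
  rw [Finset.card_eq_zero, Finset.eq_empty_iff_forall_notMem]
  intro e he
  rw [Finset.mem_filter] at he
  exact G.no_loop e (he.2 ▸ Sym2.mk_isDiag_iff.mpr rfl)

lemma ne_of_mult_pos {G : MG V E} {u v : V} (h : 0 < mult G u v) : u ≠ v := by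
  rintro rfl
  rw [mult_self] at h
  exact absurd h (lt_irrefl 0)

lemma adj_of_mult_pos {G : MG V E} {u v : V} (h : 0 < mult G u v) :
    G.adjGraph.Adj u v := by
  obtain ⟨e, he⟩ := Finset.card_pos.mp h
  rw [Finset.mem_filter] at he
  exact ⟨ne_of_mult_pos h, Or.inl ⟨e, he.2⟩⟩

lemma mult_pos_of_adj {G : MG V E} {u v : V} (h : G.adjGraph.Adj u v) :
    0 < mult G u v := by
  obtain ⟨hne, h'⟩ := h
  rw [mult, Finset.card_pos]
  rcases h' with ⟨e, he⟩ | ⟨e, he⟩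
  · exact ⟨e, Finset.mem_filter.mpr ⟨Finset.mem_univ e, he⟩⟩
  · exact ⟨e, Finset.mem_filter.mpr ⟨Finset.mem_univ e, by rw [he, Sym2.eq_swap]⟩⟩

lemma witness_unique {G : MG V E} {e : E} {u w w' : V}
    (h : G.ends e = s(u, w)) (h' : G.ends e = s(u, w')) : w = w' :=
  Sym2.congr_right.mp (h ▸ h')

/-- `dU` as a sum of multiplicities. -/
lemma dU_eq (G : MG V E) (U : Set V) (u : V) :
    dU G U u = ∑ w ∈ Finset.univ.filter (fun w => w ∉ U), mult G u w := by
  classical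
  have : dU G U u
      = (Finset.univ.filter fun e => ∃ w, w ∉ U ∧ G.ends e = s(u, w)).card := by
    rw [dU, Nat.card_eq_fintype_card, Fintype.card_subtype]
  rw [this]
  set F := Finset.univ.filter fun e : E => ∃ w, w ∉ U ∧ G.ends e = s(u, w) with hF
  have hfib : ∀ e ∈ F, (fun e => if h : ∃ w, G.ends e = s(u, w) then h.choose else u) e
      ∈ Finset.univ.filter (fun w => w ∉ U) := by
    intro e he
    rw [hF, Finset.mem_filter] at he
    obtain ⟨-, w, hw, hew⟩ := he
    have hex : ∃ w, G.ends e = s(u, w) := ⟨w, hew⟩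
    simp only [dif_pos hex]
    have := witness_unique hex.choose_spec hew
    rw [this]
    exact Finset.mem_filter.mpr ⟨Finset.mem_univ _, hw⟩
  rw [Finset.card_eq_sum_card_fiberwise hfib]
  apply Finset.sum_congr rfl
  intro w hw
  rw [Finset.mem_filter] at hw
  rw [mult]
  congr 1
  ext e
  simp only [Finset.mem_filter, Finset.mem_univ, true_and, hF]
  constructor
  · rintro ⟨⟨w', hw', hew'⟩, he⟩
    have hex : ∃ w, G.ends e = s(u, w) := ⟨w', hew'⟩
    rw [dif_pos hex] at he
    rw [← he]
    exact hex.choose_spec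
  · intro he
    have hex : ∃ w, G.ends e = s(u, w) := ⟨w, he⟩
    refine ⟨⟨w, hw.2, he⟩, ?_⟩
    rw [dif_pos hex]
    exact witness_unique hex.choose_spec he

/-- Full-vertex-set version of a parking function. -/
def Park (G : MG V E) (s : V) (C : V → ℕ) : Prop :=
  ∀ U : Set V, U.Nonempty → s ∉ U → ∃ u ∈ U, C u < dU G U u

lemma park_mono {G : MG V E} {s : V} {C C' : V → ℕ} (h : Park G s C') (hle : ∀ u, C u ≤ C' u) :
    Park G s C := by
  intro U hU hsU
  obtain ⟨u, hu, hlt⟩ := h U hU hsU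
  exact ⟨u, hu, lt_of_le_of_lt (hle u) hlt⟩

end PFAux
namespace PFAux

open Finset

variable {V E : Type*} [Fintype V] [DecidableEq V] [Fintype E]

/-- The graph Laplacian applied to an integer-valued function. -/
noncomputable def lap (G : MG V E) (f : V → ℤ) (u : V) : ℤ :=
  ∑ v, (mult G u v : ℤ) * (f u - f v)

lemma lap_add (G : MG V E) (f g : V → ℤ) (u : V) :
    lap G (fun v => f v + g v) u = lap G f u + lap G g u := by
  rw [lap, lap, lap, ← Finset.sum_add_distrib]
  apply Finset.sum_congr rfl
  intro v _
  ring

lemma lap_neg (G : MG V E) (f : V → ℤ) (u : V) :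
    lap G (fun v => -(f v)) u = -(lap G f u) := by
  rw [lap, lap, ← Finset.sum_neg_distrib]
  apply Finset.sum_congr rfl
  intro v _
  ring

lemma lap_sub (G : MG V E) (f g : V → ℤ) (u : V) :
    lap G (fun v => f v - g v) u = lap G f u - lap G g u := by
  rw [lap, lap, lap, ← Finset.sum_sub_distrib]
  apply Finset.sum_congr rfl
  intro v _
  ring

lemma lap_smul (G : MG V E) (c : ℤ) (f : V → ℤ) (u : V) :
    lap G (fun v => c * f v) u = c * lap G f u := by
  rw [lap, lap, Finset.mul_sum]
  apply Finset.sum_congr rfl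
  intro v _
  ring

lemma lap_const (G : MG V E) (c : ℤ) (u : V) :
    lap G (fun _ => c) u = 0 := by
  rw [lap]
  apply Finset.sum_eq_zero
  intro v _
  ring

lemma sum_lap (G : MG V E) (f : V → ℤ) :
    ∑ u, lap G f u = 0 := by
  unfold lap
  have h1 : ∑ u, ∑ v, (mult G u v : ℤ) * (f u - f v)
      = (∑ u, ∑ v, (mult G u v : ℤ) * f u) - ∑ u, ∑ v, (mult G u v : ℤ) * f v := by
    rw [← Finset.sum_sub_distrib]
    apply Finset.sum_congr rfl
    intro u _
    rw [← Finset.sum_sub_distrib]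
    apply Finset.sum_congr rfl
    intro v _
    ring
  rw [h1, sub_eq_zero]
  rw [Finset.sum_comm]
  apply Finset.sum_congr rfl
  intro v _
  apply Finset.sum_congr rfl
  intro u _
  rw [mult_comm]

/-- Symmetry of the Laplacian form. -/
lemma sym_lap (G : MG V E) (f g : V → ℤ) :
    ∑ u, g u * lap G f u = ∑ u, f u * lap G g u := by
  unfold lap
  have expand : ∀ (a b : V → ℤ), ∑ u, a u * ∑ v, (mult G u v : ℤ) * (b u - b v)
      = (∑ u, ∑ v, (mult G u v : ℤ) * (a u * b u))
        - ∑ u, ∑ v, (mult G u v : ℤ) * (a u * b v) := by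
    intro a b
    rw [← Finset.sum_sub_distrib]
    apply Finset.sum_congr rfl
    intro u _
    rw [Finset.mul_sum, ← Finset.sum_sub_distrib]
    apply Finset.sum_congr rfl
    intro v _
    ring
  rw [expand, expand]
  congr 1
  · apply Finset.sum_congr rfl
    intro u _
    apply Finset.sum_congr rfl
    intro v _
    ring
  · rw [Finset.sum_comm]
    apply Finset.sum_congr rfl
    intro v _
    apply Finset.sum_congr rfl
    intro u _
    rw [mult_comm]
    ring

end PFAux
namespace PFAux

open Finset

variable {V E : Type*} [Fintype V] [DecidableEq V] [Fintype E]

lemma lap_le_at_min (G : MG V E) (g : V → ℤ) (m : ℤ) (hmin : ∀ v, m ≤ g v)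
    {u : V} (hu : g u = m) :
    lap G g u ≤ - ∑ v ∈ Finset.univ.filter (fun v => ¬ g v = m), (mult G u v : ℤ) := by
  rw [lap, ← Finset.sum_filter_add_sum_filter_not Finset.univ (fun v => g v = m)]
  have h1 : ∑ v ∈ Finset.univ.filter (fun v => g v = m), (mult G u v : ℤ) * (g u - g v) = 0 := by
    apply Finset.sum_eq_zero
    intro v hv
    rw [Finset.mem_filter] at hv
    rw [hu, hv.2]
    ring
  rw [h1, zero_add, ← Finset.sum_neg_distrib]
  apply Finset.sum_le_sum
  intro v hv
  rw [Finset.mem_filter] at hv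
  have : m + 1 ≤ g v := lt_of_le_of_ne (hmin v) (fun h => hv.2 h.symm)
  have h2 : g u - g v ≤ -1 := by omega
  have h3 : (0:ℤ) ≤ (mult G u v : ℤ) := Int.natCast_nonneg _
  nlinarith

lemma lap_ge_at_max (G : MG V E) (g : V → ℤ) (M : ℤ) (hmax : ∀ v, g v ≤ M)
    {u : V} (hu : g u = M) :
    (∑ v ∈ Finset.univ.filter (fun v => ¬ g v = M), (mult G u v : ℤ)) ≤ lap G g u := by
  have := lap_le_at_min G (fun v => -(g v)) (-M) (fun v => by simpa using hmax v)
    (u := u) (by simpa using hu)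
  rw [lap_neg] at this
  have hset : Finset.univ.filter (fun v => ¬ -(g v) = -M)
      = Finset.univ.filter (fun v => ¬ g v = M) := by
    apply Finset.filter_congr
    intro v _
    constructor <;> intro h <;> omega
  rw [hset] at this
  omega

/-- Laplacian of an indicator function, inside the set. -/
lemma lap_indicator_mem (G : MG V E) (U : Set V) {u : V} (hu : u ∈ U) :
    lap G (fun v => if v ∈ U then (1:ℤ) else 0) u
      = ∑ v ∈ Finset.univ.filter (fun v => v ∉ U), (mult G u v : ℤ) := by
  rw [lap, ← Finset.sum_filter_add_sum_filter_not Finset.univ (fun v => v ∈ U)]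
  have h1 : ∑ v ∈ Finset.univ.filter (fun v => v ∈ U),
      (mult G u v : ℤ) * ((if u ∈ U then (1:ℤ) else 0) - (if v ∈ U then (1:ℤ) else 0)) = 0 := by
    apply Finset.sum_eq_zero
    intro v hv
    rw [Finset.mem_filter] at hv
    rw [if_pos hu, if_pos hv.2]
    ring
  rw [h1, zero_add]
  apply Finset.sum_congr rfl
  intro v hv
  rw [Finset.mem_filter] at hv
  rw [if_pos hu, if_neg hv.2]
  ring

/-- Laplacian of an indicator function, outside the set. -/
lemma lap_indicator_not_mem (G : MG V E) (U : Set V) {u : V} (hu : u ∉ U) :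
    lap G (fun v => if v ∈ U then (1:ℤ) else 0) u ≤ 0 := by
  rw [lap]
  apply Finset.sum_nonpos
  intro v _
  rw [if_neg hu]
  by_cases hv : v ∈ U
  · rw [if_pos hv]
    have : (0:ℤ) ≤ (mult G u v : ℤ) := Int.natCast_nonneg _
    nlinarith
  · rw [if_neg hv]
    ring_nf
    exact le_refl 0

end PFAux
namespace PFAux

open Finset

variable {V E : Type*} [Fintype V] [DecidableEq V] [Fintype E]

lemma sum_mult_le (G : MG V E) (u : V) (A : Finset V) :
    ∑ v ∈ A, mult G u v ≤ Fintype.card E := by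
  classical
  have hdisj : ∀ x ∈ A, ∀ y ∈ A, x ≠ y →
      Disjoint (Finset.univ.filter fun e => G.ends e = s(u, x))
        (Finset.univ.filter fun e => G.ends e = s(u, y)) := by
    intro x _ y _ hxy
    rw [Finset.disjoint_left]
    intro e he he'
    rw [Finset.mem_filter] at he he'
    exact hxy (witness_unique he.2 he'.2)
  calc ∑ v ∈ A, mult G u v
      = (A.biUnion fun v => Finset.univ.filter fun e => G.ends e = s(u, v)).card :=
        (Finset.card_biUnion hdisj).symm
    _ ≤ (Finset.univ : Finset E).card := Finset.card_le_card (Finset.subset_univ _)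
    _ = Fintype.card E := Finset.card_univ

/-- The auxiliary increasing "potential" defined from the distance to the sink. -/
noncomputable def hfun (n B : ℕ) (d : ℕ) : ℤ :=
  ∑ i ∈ Finset.range d, ((B : ℤ) ^ (n - 1 - i))

noncomputable def hvec (G : MG V E) (s : V) : V → ℤ :=
  fun u => hfun (Fintype.card V) (Fintype.card E + 1) (G.adjGraph.dist s u)

lemma hfun_nonneg (n B d : ℕ) : 0 ≤ hfun n B d := by
  apply Finset.sum_nonneg
  intro i _
  positivity

lemma hfun_mono (n B : ℕ) {d d' : ℕ} (h : d ≤ d') : hfun n B d ≤ hfun n B d' := by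
  apply Finset.sum_le_sum_of_subset_of_nonneg (Finset.range_subset_range.mpr h)
  intro i _ _
  positivity

lemma hvec_sink (G : MG V E) (s : V) : hvec G s s = 0 := by
  rw [hvec, SimpleGraph.dist_self, hfun, Finset.range_zero, Finset.sum_empty]

lemma hvec_nonneg (G : MG V E) (s : V) (u : V) : 0 ≤ hvec G s u :=
  hfun_nonneg _ _ _

lemma lap_hvec_ge (G : MG V E) (hG : G.adjGraph.Connected) (s : V) {u : V} (hu : u ≠ s) :
    1 ≤ lap G (hvec G s) u := by
  classical
  set n := Fintype.card V with hn
  set B := Fintype.card E + 1 with hB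
  set d := G.adjGraph.dist s u with hd
  have hd1 : 1 ≤ d := hG.pos_dist_of_ne (Ne.symm hu)
  have hdn : d < n := by
    obtain ⟨p, hp, hlen⟩ := hG.exists_path_of_dist s u
    rw [hd, ← hlen]
    exact hp.length_lt
  -- find a neighbor v₀ at distance d - 1
  obtain ⟨w, hw⟩ := hG.exists_walk_length_eq_dist u s
  have hne : u ≠ s := hu
  obtain ⟨v₀, hadj, q, hq⟩ : ∃ v₀, G.adjGraph.Adj u v₀ ∧
      ∃ q : G.adjGraph.Walk v₀ s, q.length + 1 = d := by
    cases w with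
    | nil => exact absurd rfl hne
    | cons hadj q =>
        refine ⟨_, hadj, q, ?_⟩
        have : q.length + 1 = G.adjGraph.dist u s := by
          simpa [SimpleGraph.Walk.length_cons] using hw
        rw [this, SimpleGraph.dist_comm]
  have hv₀d : G.adjGraph.dist s v₀ = d - 1 := by
    have hle : G.adjGraph.dist s v₀ ≤ d - 1 := by
      have := SimpleGraph.dist_le q
      rw [SimpleGraph.dist_comm]
      omega
    have hge : d ≤ G.adjGraph.dist s v₀ + 1 := by
      have h1 : G.adjGraph.dist u v₀ = 1 := SimpleGraph.dist_eq_one_iff_adj.mpr hadj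
      have := hG.dist_triangle (u := s) (v := v₀) (w := u)
      rw [SimpleGraph.dist_comm (u := v₀) (v := u)] at this
      omega
    omega
  -- key pointwise bounds
  have hstep : ∀ k, hfun n B (k + 1) = hfun n B k + (B : ℤ) ^ (n - 1 - k) := by
    intro k
    rw [hfun, hfun, Finset.sum_range_succ]
  have hub : ∀ v, 0 < mult G u v → hvec G s u - hvec G s v ≥ -((B:ℤ) ^ (n - 1 - d)) := by
    intro v hv
    have hadjv : G.adjGraph.Adj u v := adj_of_mult_pos hv
    have hdist : G.adjGraph.dist s v ≤ d + 1 := by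
      have h1 : G.adjGraph.dist u v = 1 := SimpleGraph.dist_eq_one_iff_adj.mpr hadjv
      have := hG.dist_triangle (u := s) (v := u) (w := v)
      omega
    have hhd : hvec G s u = hfun n B d := rfl
    have hhv : hvec G s v = hfun n B (G.adjGraph.dist s v) := rfl
    have h2 : hfun n B (G.adjGraph.dist s v) ≤ hfun n B (d + 1) := hfun_mono n B hdist
    rw [hstep d] at h2
    rw [hhd, hhv]
    omega
  have hv₀ : hvec G s u - hvec G s v₀ = (B : ℤ) ^ (n - d) := by
    have h1 : hvec G s u = hfun n B ((d - 1) + 1) := by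
      have : hvec G s u = hfun n B d := rfl
      rw [this]
      congr 1
      omega
    have h2 : hvec G s v₀ = hfun n B (d - 1) := by
      have : hvec G s v₀ = hfun n B (G.adjGraph.dist s v₀) := rfl
      rw [this, hv₀d]
    rw [h1, h2, hstep]
    have : n - 1 - (d - 1) = n - d := by omega
    rw [this]
    ring
  -- put it together
  have hsplit : lap G (hvec G s) u
      = (mult G u v₀ : ℤ) * (hvec G s u - hvec G s v₀)
        + ∑ v ∈ Finset.univ.erase v₀, (mult G u v : ℤ) * (hvec G s u - hvec G s v) := by
    rw [lap, ← Finset.add_sum_erase _ _ (Finset.mem_univ v₀)]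
  have hm₀ : 1 ≤ (mult G u v₀ : ℤ) := by
    exact_mod_cast mult_pos_of_adj hadj
  have hterm1 : (B : ℤ) ^ (n - d) ≤ (mult G u v₀ : ℤ) * (hvec G s u - hvec G s v₀) := by
    rw [hv₀]
    have : (0:ℤ) ≤ (B : ℤ) ^ (n - d) := by positivity
    nlinarith
  have hterm2 : - ((Fintype.card E : ℤ)) * (B : ℤ) ^ (n - 1 - d)
      ≤ ∑ v ∈ Finset.univ.erase v₀, (mult G u v : ℤ) * (hvec G s u - hvec G s v) := by
    have hsum : ∑ v ∈ Finset.univ.erase v₀, ((mult G u v : ℤ)) ≤ (Fintype.card E : ℤ) := by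
      exact_mod_cast sum_mult_le G u (Finset.univ.erase v₀)
    calc - ((Fintype.card E : ℤ)) * (B : ℤ) ^ (n - 1 - d)
        ≤ (∑ v ∈ Finset.univ.erase v₀, ((mult G u v : ℤ))) * (-((B : ℤ) ^ (n - 1 - d))) := by
          have h0 : (0:ℤ) ≤ (B : ℤ) ^ (n - 1 - d) := by positivity
          nlinarith
      _ = ∑ v ∈ Finset.univ.erase v₀, ((mult G u v : ℤ)) * (-((B : ℤ) ^ (n - 1 - d))) :=
          Finset.sum_mul _ _ _
      _ ≤ ∑ v ∈ Finset.univ.erase v₀, (mult G u v : ℤ) * (hvec G s u - hvec G s v) := by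
          apply Finset.sum_le_sum
          intro v _
          rcases Nat.eq_zero_or_pos (mult G u v) with h | h
          · simp [h]
          · have hb := hub v h
            have hm : (0:ℤ) ≤ (mult G u v : ℤ) := Int.natCast_nonneg _
            nlinarith
  have hpow : (B : ℤ) ^ (n - d) = (B : ℤ) ^ (n - 1 - d) * (B : ℤ) := by
    have : n - d = (n - 1 - d) + 1 := by omega
    rw [this, pow_succ]
  have hfin : (1 : ℤ) ≤ (B:ℤ) ^ (n - 1 - d) := by
    have h0 : (0:ℤ) < (B:ℤ) ^ (n - 1 - d) := by positivity
    have := Int.add_one_le_of_lt h0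
    simpa using this
  rw [hsplit]
  have hBE : (B : ℤ) = (Fintype.card E : ℤ) + 1 := by
    rw [hB]
    push_cast
    ring
  nlinarith [hterm1, hterm2]

end PFAux
namespace PFAux

open Finset

variable {V E : Type*} [Fintype V] [DecidableEq V] [Fintype E]

/-- Indicator of the sink. -/
def es (s : V) (v : V) : ℤ := if v = s then 1 else 0

lemma sum_es (s : V) : ∑ u, es s u = 1 := by
  simp only [es]
  simp

/-- `C` together with some multiple of `e_s` represents the divisor class of `D`. -/
def Eqn (G : MG V E) (s : V) (D : V → ℤ) (C : V → ℕ) : Prop :=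
  ∃ k f, ∀ u, D u = (C u : ℤ) + k * es s u + lap G f u

/-- `C` is the `s`-reduced representative of the divisor class of `D`. -/
def RedOf (G : MG V E) (s : V) (D : V → ℤ) (C : V → ℕ) : Prop :=
  Park G s C ∧ C s = 0 ∧ Eqn G s D C

lemma eqn_deg {G : MG V E} {s : V} {D : V → ℤ} {C : V → ℕ} {k : ℤ} {f : V → ℤ}
    (h : ∀ u, D u = (C u : ℤ) + k * es s u + lap G f u) :
    ∑ u, D u = (∑ u, (C u : ℤ)) + k := by
  have : ∑ u, D u = (∑ u, (C u : ℤ)) + (∑ u, k * es s u) + ∑ u, lap G f u := by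
    rw [← Finset.sum_add_distrib, ← Finset.sum_add_distrib]
    exact Finset.sum_congr rfl fun u _ => h u
  rw [this, sum_lap, ← Finset.mul_sum, sum_es]
  ring

theorem red_unique {G : MG V E} {s : V} {D : V → ℤ} {C C' : V → ℕ}
    (h1 : RedOf G s D C) (h2 : RedOf G s D C') : C = C' := by
  classical
  obtain ⟨hp1, hs1, k, f, hf⟩ := h1
  obtain ⟨hp2, hs2, k', f', hf'⟩ := h2
  set g : V → ℤ := fun u => f' u - f u with hg
  have key : ∀ u, (C u : ℤ) + k * es s u = (C' u : ℤ) + k' * es s u + lap G g u := by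
    intro u
    have e1 := hf u
    have e2 := hf' u
    have : lap G g u = lap G f' u - lap G f u := lap_sub G f' f u
    rw [this]
    linarith
  obtain ⟨u₀, -, hmin⟩ := Finset.exists_min_image Finset.univ g ⟨s, Finset.mem_univ s⟩
  set m := g u₀ with hm
  by_cases hconst : ∀ v, g v = m
  · have hlap0 : ∀ u, lap G g u = 0 := by
      intro u
      have : g = fun _ => m := funext hconst
      rw [this]
      exact lap_const G m u
    funext u
    by_cases hus : u = s
    · rw [hus, hs1, hs2]
    · have := key u
      rw [hlap0 u, es, if_neg hus] at this
      exact_mod_cast (by linarith : (C u : ℤ) = (C' u : ℤ))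
  · push_neg at hconst
    by_cases hsW : g s = m
    · -- max argument
      obtain ⟨u₁, -, hmax⟩ := Finset.exists_max_image Finset.univ g ⟨s, Finset.mem_univ s⟩
      set M := g u₁ with hM
      have hmM : m < M := by
        obtain ⟨v, hv⟩ := hconst
        have h1 := hmin v (Finset.mem_univ v)
        have h2 := hmax v (Finset.mem_univ v)
        rcases lt_or_eq_of_le h1 with h | h
        · exact lt_of_lt_of_le h h2
        · exact absurd h.symm hv
      set Umax : Set V := {v | g v = M} with hUmax
      have hsUmax : s ∉ Umax := by
        rw [hUmax]
        intro h
        rw [Set.mem_setOf_eq] at h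
        omega
      obtain ⟨u, hu, hlt⟩ := hp1 Umax ⟨u₁, rfl⟩ hsUmax
      have hus : u ≠ s := fun h => hsUmax (h ▸ hu)
      have hlapge : (∑ v ∈ Finset.univ.filter (fun v => ¬ g v = M), (mult G u v : ℤ))
          ≤ lap G g u := lap_ge_at_max G g M (fun v => hmax v (Finset.mem_univ v)) hu
      have hdU : (dU G Umax u : ℤ)
          = ∑ v ∈ Finset.univ.filter (fun v => ¬ g v = M), (mult G u v : ℤ) := by
        rw [dU_eq]
        push_cast
        congr 1
        ext v
        simp [hUmax, Set.mem_setOf_eq]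
      have hk := key u
      rw [es, if_neg hus] at hk
      have : (dU G Umax u : ℤ) ≤ (C u : ℤ) := by
        rw [hdU]
        have h0 : (0:ℤ) ≤ (C' u : ℤ) := Int.natCast_nonneg _
        linarith
      have : (dU G Umax u : ℤ) ≤ (C u : ℤ) := this
      exact absurd hlt (by exact_mod_cast not_lt.mpr this)
    · -- min argument
      set W : Set V := {v | g v = m} with hW
      have hsW' : s ∉ W := hsW
      obtain ⟨u, hu, hlt⟩ := hp2 W ⟨u₀, rfl⟩ hsW'
      have hus : u ≠ s := fun h => hsW' (h ▸ hu)
      have hlaple : lap G g u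
          ≤ - ∑ v ∈ Finset.univ.filter (fun v => ¬ g v = m), (mult G u v : ℤ) :=
        lap_le_at_min G g m (fun v => hmin v (Finset.mem_univ v)) hu
      have hdU : (dU G W u : ℤ)
          = ∑ v ∈ Finset.univ.filter (fun v => ¬ g v = m), (mult G u v : ℤ) := by
        rw [dU_eq]
        push_cast
        congr 1
        ext v
        simp [hW, Set.mem_setOf_eq]
      have hk := key u
      rw [es, if_neg hus] at hk
      have hCu : (0:ℤ) ≤ (C u : ℤ) := Int.natCast_nonneg _
      have : (C' u : ℤ) + (dU G W u : ℤ) ≤ (C' u : ℤ) + lap G g u + (2 * dU G W u) := by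
        rw [hdU]
        linarith
      have hfin : (dU G W u : ℤ) ≤ (C' u : ℤ) := by
        rw [hdU]
        linarith
      exact absurd hlt (by exact_mod_cast not_lt.mpr hfin)

theorem red_eff {G : MG V E} {s : V} {D : V → ℤ} {C : V → ℕ} {k : ℤ} {f : V → ℤ}
    (hD : ∀ u, 0 ≤ D u) (hpark : Park G s C) (hCs : C s = 0)
    (hf : ∀ u, D u = (C u : ℤ) + k * es s u + lap G f u) : 0 ≤ k := by
  classical
  by_contra hk
  push_neg at hk
  obtain ⟨u₀, -, hmin⟩ := Finset.exists_min_image Finset.univ f ⟨s, Finset.mem_univ s⟩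
  set m := f u₀ with hm
  by_cases hsW : f s = m
  · have hlaple : lap G f s
        ≤ - ∑ v ∈ Finset.univ.filter (fun v => ¬ f v = m), (mult G s v : ℤ) :=
      lap_le_at_min G f m (fun v => hmin v (Finset.mem_univ v)) hsW
    have hsum : (0:ℤ) ≤ ∑ v ∈ Finset.univ.filter (fun v => ¬ f v = m), (mult G s v : ℤ) :=
      Finset.sum_nonneg fun v _ => Int.natCast_nonneg _
    have := hf s
    rw [hCs, es, if_pos rfl] at this
    have := hD s
    omega
  · set W : Set V := {v | f v = m} with hW
    obtain ⟨u, hu, hlt⟩ := hpark W ⟨u₀, rfl⟩ hsW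
    have hus : u ≠ s := fun h => hsW (h ▸ hu)
    have hlaple : lap G f u
        ≤ - ∑ v ∈ Finset.univ.filter (fun v => ¬ f v = m), (mult G u v : ℤ) :=
      lap_le_at_min G f m (fun v => hmin v (Finset.mem_univ v)) hu
    have hdU : (dU G W u : ℤ)
        = ∑ v ∈ Finset.univ.filter (fun v => ¬ f v = m), (mult G u v : ℤ) := by
      rw [dU_eq]
      push_cast
      congr 1
      ext v
      simp [hW, Set.mem_setOf_eq]
    have heq := hf u
    rw [es, if_neg hus] at heq
    have hDu := hD u
    have hlt' : (C u : ℤ) < (dU G W u : ℤ) := by exact_mod_cast hlt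
    rw [hdU] at hlt'
    omega

/-- Energy of a configuration. -/
noncomputable def En (G : MG V E) (s : V) (C : V → ℕ) : ℤ :=
  ∑ u, hvec G s u * (C u : ℤ)

lemma En_nonneg (G : MG V E) (s : V) (C : V → ℕ) : 0 ≤ En G s C :=
  Finset.sum_nonneg fun u _ =>
    mul_nonneg (hvec_nonneg G s u) (Int.natCast_nonneg _)

lemma fire {G : MG V E} (hG : G.adjGraph.Connected) {s : V} {D : V → ℤ} {C : V → ℕ}
    (hnp : ¬ Park G s C) (hCs : C s = 0) (hlink : Eqn G s D C) :
    ∃ C' : V → ℕ, C' s = 0 ∧ Eqn G s D C' ∧ En G s C' + 1 ≤ En G s C := by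
  classical
  rw [Park] at hnp
  push_neg at hnp
  obtain ⟨U, hUne, hsU, hUall⟩ := hnp
  obtain ⟨k, f, hf⟩ := hlink
  set g1 : V → ℤ := fun v => if v ∈ U then (1:ℤ) else 0 with hg1
  set Ci : V → ℤ := fun u => (C u : ℤ) - lap G g1 u with hCi
  have hnonneg : ∀ u, 0 ≤ Ci u := by
    intro u
    simp only [hCi]
    by_cases hu : u ∈ U
    · have h1 := lap_indicator_mem G U hu
      have h2 : (dU G U u : ℤ) ≤ (C u : ℤ) := by exact_mod_cast hUall u hu
      have h3 : (dU G U u : ℤ)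
          = ∑ v ∈ Finset.univ.filter (fun v => v ∉ U), (mult G u v : ℤ) := by
        rw [dU_eq]; push_cast; rfl
      rw [h1, ← h3]
      linarith
    · have h1 := lap_indicator_not_mem G U hu
      have h2 : (0:ℤ) ≤ (C u : ℤ) := Int.natCast_nonneg _
      linarith
  set C' : V → ℕ := fun u => if u = s then 0 else (Ci u).toNat with hC'
  have hC's : C' s = 0 := by simp only [hC']; simp
  have hC'val : ∀ u, u ≠ s → (C' u : ℤ) = Ci u := by
    intro u hu
    simp only [hC', if_neg hu]
    exact Int.toNat_of_nonneg (hnonneg u)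
  refine ⟨C', hC's, ⟨k - lap G g1 s, fun v => f v + g1 v, ?_⟩, ?_⟩
  · intro u
    have hlapadd : lap G (fun v => f v + g1 v) u = lap G f u + lap G g1 u := lap_add G f g1 u
    by_cases hu : u = s
    · subst hu
      have h0 := hf u
      rw [hCs, es, if_pos rfl] at h0
      rw [hC's, hlapadd, es, if_pos rfl]
      push_cast at h0 ⊢
      linarith
    · have h0 := hf u
      rw [es, if_neg hu] at h0
      rw [hC'val u hu, hlapadd, es, if_neg hu]
      simp only [hCi]
      linarith
  · have hdiff : En G s C' - En G s C = - ∑ u, g1 u * lap G (hvec G s) u := by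
      have h1 : En G s C' - En G s C = ∑ u, hvec G s u * ((C' u : ℤ) - (C u : ℤ)) := by
        rw [En, En, ← Finset.sum_sub_distrib]
        apply Finset.sum_congr rfl
        intro u _
        ring
      rw [h1, ← sym_lap]
      rw [← Finset.sum_neg_distrib]
      apply Finset.sum_congr rfl
      intro u _
      by_cases hu : u = s
      · subst hu
        rw [hvec_sink]
        ring
      · rw [hC'val u hu]
        simp only [hCi]
        ring
    have hsum : ∑ u, g1 u * lap G (hvec G s) u
        = ∑ u ∈ Finset.univ.filter (fun u => u ∈ U), lap G (hvec G s) u := by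
      rw [Finset.sum_filter]
      apply Finset.sum_congr rfl
      intro u _
      simp only [hg1]
      by_cases hu : u ∈ U
      · rw [if_pos hu, if_pos hu, one_mul]
      · rw [if_neg hu, if_neg hu, zero_mul]
    have hge1 : 1 ≤ ∑ u ∈ Finset.univ.filter (fun u => u ∈ U), lap G (hvec G s) u := by
      obtain ⟨w, hw⟩ := hUne
      have hwmem : w ∈ Finset.univ.filter (fun u => u ∈ U) :=
        Finset.mem_filter.mpr ⟨Finset.mem_univ w, hw⟩
      have hterm : ∀ u ∈ Finset.univ.filter (fun u => u ∈ U), (1:ℤ) ≤ lap G (hvec G s) u := by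
        intro u hu
        rw [Finset.mem_filter] at hu
        have hus : u ≠ s := fun h => hsU (h ▸ hu.2)
        exact lap_hvec_ge G hG s hus
      have hcard : 0 < (Finset.univ.filter (fun u => u ∈ U)).card :=
        Finset.card_pos.mpr ⟨w, hwmem⟩
      calc (1:ℤ) ≤ ((Finset.univ.filter (fun u => u ∈ U)).card : ℤ) := by exact_mod_cast hcard
        _ = ∑ _u ∈ Finset.univ.filter (fun u => u ∈ U), (1:ℤ) := by
            rw [Finset.sum_const, nsmul_eq_mul, mul_one]
        _ ≤ ∑ u ∈ Finset.univ.filter (fun u => u ∈ U), lap G (hvec G s) u :=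
            Finset.sum_le_sum hterm
    omega

theorem red_exists {G : MG V E} (hG : G.adjGraph.Connected) (s : V) (D : V → ℤ) :
    ∃ C, RedOf G s D C := by
  classical
  set h := hvec G s with hh
  set K : ℕ := ∑ u, (D u).natAbs with hK
  have hKb : ∀ u, -(D u) ≤ (K : ℤ) := by
    intro u
    have h1 : -(D u) ≤ ((D u).natAbs : ℤ) := by
      rw [Int.natCast_natAbs]
      exact neg_le_abs _
    have h2 : ((D u).natAbs : ℤ) ≤ (K : ℤ) := by
      rw [hK]
      push_cast
      exact Finset.single_le_sum (f := fun v => |D v|)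
        (fun v _ => abs_nonneg _) (Finset.mem_univ u)
    linarith
  set C₀ : V → ℕ := fun u => if u = s then 0 else (D u + K * lap G h u).toNat with hC₀
  have hC₀s : C₀ s = 0 := by simp only [hC₀]; simp
  have hC₀pos : ∀ u, u ≠ s → 0 ≤ D u + K * lap G h u := by
    intro u hu
    have h1 : 1 ≤ lap G h u := lap_hvec_ge G hG s hu
    have h2 : (K:ℤ) ≤ K * lap G h u := by
      have h0 : (0:ℤ) ≤ (K:ℤ) := Int.natCast_nonneg _
      nlinarith
    linarith [hKb u]
  have hEqn : Eqn G s D C₀ := by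
    refine ⟨D s + K * lap G h s, fun v => -((K:ℤ) * h v), fun u => ?_⟩
    have hlap : lap G (fun v => -((K:ℤ) * h v)) u = -((K:ℤ) * lap G h u) := by
      rw [lap_neg G (fun v => (K:ℤ) * h v) u, lap_smul]
    rw [hlap]
    by_cases hu : u = s
    · subst hu
      rw [hC₀s, es, if_pos rfl]
      push_cast
      ring
    · rw [es, if_neg hu]
      simp only [hC₀, if_neg hu]
      rw [Int.toNat_of_nonneg (hC₀pos u hu)]
      ring
  have main : ∀ N (C : V → ℕ), C s = 0 → Eqn G s D C → (En G s C).toNat ≤ N →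
      ∃ C', RedOf G s D C' := by
    intro N
    induction N with
    | zero =>
        intro C h1 h2 h3
        by_cases hp : Park G s C
        · exact ⟨C, hp, h1, h2⟩
        · obtain ⟨C', hs', heqn', hen'⟩ := fire hG hp h1 h2
          have e1 := En_nonneg G s C'
          have e2 := En_nonneg G s C
          omega
    | succ N ih =>
        intro C h1 h2 h3
        by_cases hp : Park G s C
        · exact ⟨C, hp, h1, h2⟩
        · obtain ⟨C', hs', heqn', hen'⟩ := fire hG hp h1 h2
          have e1 := En_nonneg G s C'
          have e2 := En_nonneg G s C
          exact ih C' hs' heqn' (by omega)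
  exact main (En G s C₀).toNat C₀ hC₀s hEqn (le_refl _)

end PFAux
namespace PFAux

open Finset

variable {V E : Type*} [Fintype V] [DecidableEq V] [Fintype E]

lemma sym2_exists (z : Sym2 V) : ∃ x y, z = s(x, y) :=
  Sym2.ind (fun x y => ⟨x, y, rfl⟩) z

noncomputable def burn (G : MG V E) (s : V) (C : V → ℕ) : ℕ → Finset V
  | 0 => {s}
  | (k+1) => burn G s C k ∪ Finset.univ.filter
      (fun u => u ≠ s ∧ C u < ∑ w ∈ burn G s C k, mult G u w)

lemma sink_mem_burn (G : MG V E) (s : V) (C : V → ℕ) : ∀ k, s ∈ burn G s C k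
  | 0 => Finset.mem_singleton_self s
  | (k+1) => Finset.mem_union_left _ (sink_mem_burn G s C k)

lemma burn_grow {G : MG V E} {s : V} {C : V → ℕ} (hP : Park G s C) (k : ℕ)
    (h : burn G s C k ≠ Finset.univ) :
    ∃ u, u ∉ burn G s C k ∧ u ∈ burn G s C (k+1) := by
  classical
  set U : Set V := {v | v ∉ burn G s C k} with hU
  have hUne : U.Nonempty := by
    by_contra hc
    rw [Set.not_nonempty_iff_eq_empty] at hc
    apply h
    rw [Finset.eq_univ_iff_forall]
    intro v
    by_contra hv
    have : v ∈ U := hv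
    rw [hc] at this
    exact this
  have hsU : s ∉ U := by
    intro hs
    exact hs (sink_mem_burn G s C k)
  obtain ⟨u, hu, hlt⟩ := hP U hUne hsU
  have hus : u ≠ s := fun h' => hsU (h' ▸ hu)
  have hdUeq : dU G U u = ∑ w ∈ burn G s C k, mult G u w := by
    rw [dU_eq]
    congr 1
    ext w
    simp [hU, Set.mem_setOf_eq]
  refine ⟨u, hu, ?_⟩
  rw [burn]
  apply Finset.mem_union_right
  rw [Finset.mem_filter]
  exact ⟨Finset.mem_univ u, hus, by rw [← hdUeq]; exact hlt⟩

lemma burn_univ {G : MG V E} {s : V} {C : V → ℕ} (hP : Park G s C) :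
    burn G s C (Fintype.card V) = Finset.univ := by
  have key : ∀ k, burn G s C k = Finset.univ ∨ k + 1 ≤ (burn G s C k).card := by
    intro k
    induction k with
    | zero =>
        by_cases h : burn G s C 0 = Finset.univ
        · exact Or.inl h
        · right
          rw [burn, Finset.card_singleton]
    | succ k ih =>
        rcases ih with h | h
        · left
          rw [Finset.eq_univ_iff_forall]
          intro v
          rw [burn]
          exact Finset.mem_union_left _ (h ▸ Finset.mem_univ v)
        · by_cases h2 : burn G s C k = Finset.univ
          · left
            rw [Finset.eq_univ_iff_forall]
            intro v
            rw [burn]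
            exact Finset.mem_union_left _ (h2 ▸ Finset.mem_univ v)
          · right
            obtain ⟨u, hu1, hu2⟩ := burn_grow hP k h2
            have hss : burn G s C k ⊂ burn G s C (k+1) := by
              constructor
              · rw [burn]; exact Finset.subset_union_left
              · intro hsub
                exact hu1 (hsub hu2)
            have := Finset.card_lt_card hss
            omega
  rcases key (Fintype.card V) with h | h
  · exact h
  · have := Finset.card_le_univ (burn G s C (Fintype.card V))
    omega

lemma order_spec {G : MG V E} {s : V} {C : V → ℕ} (hP : Park G s C) :
    ∃ ρ : V → ℕ, Function.Injective ρ ∧ (∀ u, u ≠ s → ρ s < ρ u) ∧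
      ∀ u, u ≠ s → C u < ∑ w ∈ Finset.univ.filter (fun w => ρ w < ρ u), mult G u w := by
  classical
  have hex : ∀ u, ∃ k, u ∈ burn G s C k := fun u =>
    ⟨Fintype.card V, by rw [burn_univ hP]; exact Finset.mem_univ u⟩
  obtain ⟨r, hmem, hle⟩ : ∃ r : V → ℕ, (∀ u, u ∈ burn G s C (r u)) ∧
      (∀ w k, w ∈ burn G s C k → r w ≤ k) :=
    ⟨fun u => Nat.find (hex u), fun u => Nat.find_spec (hex u),
      fun w k hk => Nat.find_min' (hex w) hk⟩
  have hrs : r s = 0 := Nat.eq_zero_of_le_zero (hle s 0 (sink_mem_burn G s C 0))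
  have hr0 : ∀ u, u ≠ s → r u ≠ 0 := by
    intro u hu h0
    have := hmem u
    rw [h0, burn, Finset.mem_singleton] at this
    exact hu this
  have hkey : ∀ u, u ≠ s → C u < ∑ w ∈ Finset.univ.filter (fun w => r w < r u), mult G u w := by
    intro u hu
    have h0 : r u ≠ 0 := hr0 u hu
    have heq : r u = (r u - 1) + 1 := by omega
    have hmem' : u ∈ burn G s C ((r u - 1) + 1) := by rw [← heq]; exact hmem u
    have hnot : u ∉ burn G s C (r u - 1) := by
      intro hc
      have := hle u (r u - 1) hc
      omega
    rw [burn, Finset.mem_union] at hmem'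
    rcases hmem' with h | h
    · exact absurd h hnot
    · rw [Finset.mem_filter] at h
      obtain ⟨-, -, hlt⟩ := h
      calc C u < ∑ w ∈ burn G s C (r u - 1), mult G u w := hlt
        _ ≤ ∑ w ∈ Finset.univ.filter (fun w => r w < r u), mult G u w := by
            apply Finset.sum_le_sum_of_subset
            intro w hw
            rw [Finset.mem_filter]
            refine ⟨Finset.mem_univ w, ?_⟩
            have h1 : r w ≤ r u - 1 := hle w (r u - 1) hw
            omega
  set n := Fintype.card V with hn
  set ι : V → ℕ := fun u => ((Fintype.equivFin V) u : ℕ) with hι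
  have hιlt : ∀ u, ι u < n := fun u => ((Fintype.equivFin V) u).is_lt
  set ρ : V → ℕ := fun u => r u * n + ι u with hρ
  have hdecomp : ∀ x, ρ x / n = r x ∧ ρ x % n = ι x := by
    intro x
    have hpos : 0 < n := lt_of_le_of_lt (Nat.zero_le _) (hιlt x)
    constructor
    · show (r x * n + ι x) / n = r x
      rw [Nat.add_comm, Nat.add_mul_div_right _ _ hpos, Nat.div_eq_of_lt (hιlt x), Nat.zero_add]
    · show (r x * n + ι x) % n = ι x
      rw [Nat.add_comm, Nat.add_mul_mod_self_right, Nat.mod_eq_of_lt (hιlt x)]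
  have hinj : Function.Injective ρ := by
    intro a b hab
    have ha := hdecomp a
    have hb := hdecomp b
    have h1 : ι a = ι b := by rw [← ha.2, ← hb.2, hab]
    have : (Fintype.equivFin V) a = (Fintype.equivFin V) b := Fin.ext h1
    exact (Fintype.equivFin V).injective this
  have hmono : ∀ {a b}, r a < r b → ρ a < ρ b := by
    intro a b hab
    have : ρ a < (r a + 1) * n := by
      show r a * n + ι a < (r a + 1) * n
      have := hιlt a
      nlinarith
    have h2 : (r a + 1) * n ≤ r b * n := Nat.mul_le_mul_right n hab
    have h3 : r b * n ≤ ρ b := Nat.le_add_right _ _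
    omega
  refine ⟨ρ, hinj, ?_, ?_⟩
  · intro u hu
    apply hmono
    rw [hrs]
    exact Nat.pos_of_ne_zero (hr0 u hu)
  · intro u hu
    calc C u < ∑ w ∈ Finset.univ.filter (fun w => r w < r u), mult G u w := hkey u hu
      _ ≤ ∑ w ∈ Finset.univ.filter (fun w => ρ w < ρ u), mult G u w := by
          apply Finset.sum_le_sum_of_subset
          intro w hw
          rw [Finset.mem_filter] at hw ⊢
          exact ⟨Finset.mem_univ w, hmono hw.2⟩

lemma park_of_order {G : MG V E} {s : V} {C : V → ℕ} (ρ : V → ℕ)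
    (hb : ∀ u, u ≠ s → C u < ∑ w ∈ Finset.univ.filter (fun w => ρ w < ρ u), mult G u w) :
    Park G s C := by
  intro U hUne hsU
  classical
  have hfin : (Set.toFinite U).toFinset.Nonempty := by
    rw [Set.Finite.toFinset_nonempty]
    exact hUne
  obtain ⟨u, hu, hmin⟩ := Finset.exists_min_image _ ρ hfin
  rw [Set.Finite.mem_toFinset] at hu
  have hus : u ≠ s := fun h => hsU (h ▸ hu)
  refine ⟨u, hu, ?_⟩
  calc C u < ∑ w ∈ Finset.univ.filter (fun w => ρ w < ρ u), mult G u w := hb u hus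
    _ ≤ ∑ w ∈ Finset.univ.filter (fun w => w ∉ U), mult G u w := by
        apply Finset.sum_le_sum_of_subset
        intro w hw
        rw [Finset.mem_filter] at hw ⊢
        refine ⟨Finset.mem_univ w, ?_⟩
        intro hwU
        have := hmin w (by rw [Set.Finite.mem_toFinset]; exact hwU)
        omega
    _ = dU G U u := (dU_eq G U u).symm

lemma sum_inC (G : MG V E) (s : V) (ρ : V → ℕ) (hinj : Function.Injective ρ)
    (hs : ∀ u, u ≠ s → ρ s < ρ u) :
    ∑ u ∈ Finset.univ.erase s, ∑ w ∈ Finset.univ.filter (fun w => ρ w < ρ u), mult G u w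
      = Fintype.card E := by
  classical
  -- extend the sum to all of `univ`
  have hsterm : ∑ w ∈ Finset.univ.filter (fun w => ρ w < ρ s), mult G s w = 0 := by
    apply Finset.sum_eq_zero
    intro w hw
    rw [Finset.mem_filter] at hw
    exfalso
    by_cases hws : w = s
    · rw [hws] at hw; omega
    · have := hs w hws; omega
  have hext : (∑ u ∈ Finset.univ.erase s,
        ∑ w ∈ Finset.univ.filter (fun w => ρ w < ρ u), mult G u w)
        + ∑ w ∈ Finset.univ.filter (fun w => ρ w < ρ s), mult G s w
      = ∑ u, ∑ w ∈ Finset.univ.filter (fun w => ρ w < ρ u), mult G u w :=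
    Finset.sum_erase_add _ _ (Finset.mem_univ s)
  rw [hsterm, Nat.add_zero] at hext
  rw [hext]
  -- the fiber map
  have hcomm : ∀ a b : V, (if ρ b < ρ a then (a, b) else (b, a))
      = (if ρ a < ρ b then (b, a) else (a, b)) := by
    intro a b
    by_cases h1 : ρ b < ρ a
    · rw [if_pos h1, if_neg (by omega)]
    · by_cases h2 : ρ a < ρ b
      · rw [if_neg h1, if_pos h2]
      · have hab : a = b := hinj (by omega)
        rw [if_neg h1, if_neg h2, hab]
  set pr : Sym2 V → V × V := Sym2.lift ⟨fun a b => if ρ b < ρ a then (a, b) else (b, a), hcomm⟩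
    with hpr
  have hpr_mk : ∀ a b : V, pr s(a, b) = if ρ b < ρ a then (a, b) else (b, a) := by
    intro a b
    rw [hpr, Sym2.lift_mk]
  have hpr_sym : ∀ a b : V, s((pr s(a, b)).1, (pr s(a, b)).2) = s(a, b) := by
    intro a b
    rw [hpr_mk]
    by_cases h : ρ b < ρ a
    · rw [if_pos h]
    · rw [if_neg h]
      exact Sym2.eq_swap
  set F : E → V × V := fun e => pr (G.ends e) with hF
  set T : Finset (V × V) := Finset.univ.filter (fun p : V × V => ρ p.2 < ρ p.1) with hT
  have hFT : ∀ e ∈ (Finset.univ : Finset E), F e ∈ T := by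
    intro e _
    obtain ⟨x, y, hxy⟩ := sym2_exists (G.ends e)
    have hne : x ≠ y := by
      intro h
      exact G.no_loop e (by rw [hxy, h]; exact Sym2.mk_isDiag_iff.mpr rfl)
    rw [hT, Finset.mem_filter]
    refine ⟨Finset.mem_univ _, ?_⟩
    rw [hF]
    simp only
    rw [hxy, hpr_mk]
    by_cases h : ρ y < ρ x
    · rw [if_pos h]; exact h
    · rw [if_neg h]
      have : ρ x ≠ ρ y := fun hc => hne (hinj hc)
      simp only
      omega
  have hcard := Finset.card_eq_sum_card_fiberwise hFT
  rw [Finset.card_univ] at hcard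
  have hfib : ∀ p ∈ T, (Finset.univ.filter fun e => F e = p).card = mult G p.1 p.2 := by
    intro p hp
    rw [hT, Finset.mem_filter] at hp
    rw [mult]
    congr 1
    ext e
    simp only [Finset.mem_filter, Finset.mem_univ, true_and]
    constructor
    · intro he
      obtain ⟨x, y, hxy⟩ := sym2_exists (G.ends e)
      have hpe : p = pr s(x, y) := by
        rw [← he, hF]
        simp only
        rw [hxy]
      rw [hxy, hpe]
      exact (hpr_sym x y).symm
    · intro he
      rw [hF]
      simp only
      rw [he, hpr_mk, if_pos hp.2]
  rw [hcard]
  rw [Finset.sum_congr rfl hfib]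
  rw [hT, Finset.sum_filter]
  have huniv : (Finset.univ : Finset (V × V)) = Finset.univ ×ˢ Finset.univ :=
    (Finset.univ_product_univ).symm
  rw [huniv, Finset.sum_product]
  apply Finset.sum_congr rfl
  intro u _
  rw [Finset.sum_filter]

lemma sum_bound {G : MG V E} {s : V} {C : V → ℕ} (hP : Park G s C) :
    ∑ u ∈ Finset.univ.erase s, (C u + 1) ≤ Fintype.card E := by
  obtain ⟨ρ, hinj, hsρ, hb⟩ := order_spec hP
  rw [← sum_inC G s ρ hinj hsρ]
  apply Finset.sum_le_sum
  intro u hu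
  rw [Finset.mem_erase] at hu
  exact Nat.succ_le_of_lt (hb u hu.1)

lemma exists_bump {G : MG V E} {s : V} {C : V → ℕ} (hP : Park G s C)
    (hlt : ∑ u ∈ Finset.univ.erase s, (C u + 1) < Fintype.card E) :
    ∃ u, u ≠ s ∧ Park G s (Function.update C u (C u + 1)) := by
  obtain ⟨ρ, hinj, hsρ, hb⟩ := order_spec hP
  rw [← sum_inC G s ρ hinj hsρ] at hlt
  obtain ⟨u, hu, hclt⟩ := Finset.exists_lt_of_sum_lt hlt
  rw [Finset.mem_erase] at hu
  refine ⟨u, hu.1, ?_⟩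
  apply park_of_order ρ
  intro v hv
  by_cases hvu : v = u
  · subst hvu
    rw [Function.update_self]
    exact hclt
  · rw [Function.update_of_ne hvu]
    exact hb v hv

end PFAux
namespace PFAux

open Finset

variable {V E : Type*} [Fintype V] [DecidableEq V] [Fintype E]

/-- Full-vertex-set version of a maximal parking function. -/
def MaxPark (G : MG V E) (s : V) (C : V → ℕ) : Prop :=
  Park G s C ∧ C s = 0 ∧ ∀ C' : V → ℕ, Park G s C' → C' s = 0 → (∀ u, C u ≤ C' u) → C' = C

lemma maxPark_iff (G : MG V E) (s : V) (C : V → ℕ) :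
    MaxPark G s C ↔ Park G s C ∧ C s = 0 ∧
      ∑ u ∈ Finset.univ.erase s, (C u + 1) = Fintype.card E := by
  constructor
  · rintro ⟨hp, hs, hmax⟩
    refine ⟨hp, hs, ?_⟩
    rcases lt_or_eq_of_le (sum_bound hp) with hlt | heq
    · exfalso
      obtain ⟨u, hu, hp'⟩ := exists_bump hp hlt
      have hupd : Function.update C u (C u + 1) = C := by
        apply hmax _ hp'
        · rw [Function.update_of_ne (fun h => hu h.symm)]
          exact hs
        · intro v
          by_cases hv : v = u
          · subst hv; rw [Function.update_self]; omega
          · rw [Function.update_of_ne hv]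
      have := congrFun hupd u
      rw [Function.update_self] at this
      omega
    · exact heq
  · rintro ⟨hp, hs, hsum⟩
    refine ⟨hp, hs, ?_⟩
    intro C' hp' hs' hle
    have hb := sum_bound hp'
    have hmono : ∀ u ∈ Finset.univ.erase s, C u + 1 ≤ C' u + 1 := fun u _ => by
      have := hle u; omega
    have hsum2 : ∑ u ∈ Finset.univ.erase s, (C u + 1)
        ≤ ∑ u ∈ Finset.univ.erase s, (C' u + 1) := Finset.sum_le_sum hmono
    have heqs : ∑ u ∈ Finset.univ.erase s, (C u + 1)
        = ∑ u ∈ Finset.univ.erase s, (C' u + 1) := by omega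
    have hpt := (Finset.sum_eq_sum_iff_of_le hmono).mp heqs
    funext u
    by_cases hu : u = s
    · rw [hu, hs, hs']
    · have := hpt u (Finset.mem_erase.mpr ⟨hu, Finset.mem_univ u⟩)
      omega

lemma gsum_eq {s : V} (C : V → ℕ) (hCs : C s = 0) :
    ∑ u ∈ Finset.univ.erase s, (C u + 1) = (∑ u, C u) + (Fintype.card V - 1) := by
  rw [Finset.sum_add_distrib, Finset.sum_const, smul_eq_mul, mul_one,
    Finset.card_erase_of_mem (Finset.mem_univ s), Finset.card_univ]
  congr 1
  rw [← Finset.add_sum_erase _ _ (Finset.mem_univ s), hCs, Nat.zero_add]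

/-- The degree-zero divisor attached to a configuration. -/
def divP (s : V) (C : V → ℕ) : V → ℤ :=
  fun u => (C u : ℤ) - (∑ v, (C v : ℤ)) * es s u

/-- The degree-(g-1) divisor attached to a configuration. -/
def divM (s : V) (C : V → ℕ) : V → ℤ :=
  fun u => (C u : ℤ) - es s u

lemma redP_flip {G : MG V E} {s t : V} {C C₂ : V → ℕ}
    (hC : Park G s C) (hCs : C s = 0) (hRed : RedOf G t (divP s C) C₂) :
    RedOf G s (divP t C₂) C := by
  obtain ⟨hP₂, hC₂t, k, f, hf⟩ := hRed
  have hdeg : ∑ u, divP s C u = 0 := by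
    unfold divP
    rw [Finset.sum_sub_distrib, ← Finset.mul_sum, sum_es, mul_one, sub_self]
  have hk : k = -(∑ v, (C₂ v : ℤ)) := by
    have := eqn_deg hf
    rw [hdeg] at this
    linarith
  refine ⟨hC, hCs, ⟨-(∑ v, (C v : ℤ)), fun v => -(f v), fun u => ?_⟩⟩
  have h1 := hf u
  have h2 : lap G (fun v => -(f v)) u = -(lap G f u) := lap_neg G f u
  rw [h2]
  unfold divP at h1 ⊢
  rw [hk] at h1
  linarith

lemma redM_flip {G : MG V E} {s t : V} {C C₂ : V → ℕ}
    (hC : Park G s C) (hCs : C s = 0)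
    (hgs : ∑ u ∈ Finset.univ.erase s, (C u + 1) = Fintype.card E)
    (hRed : RedOf G t (divM s C) C₂) :
    (∑ u ∈ Finset.univ.erase t, (C₂ u + 1) = Fintype.card E)
      ∧ RedOf G s (divM t C₂) C := by
  obtain ⟨hP₂, hC₂t, k, f, hf⟩ := hRed
  have hdeg : ∑ u, divM s C u = (∑ u, (C u : ℤ)) - 1 := by
    unfold divM
    rw [Finset.sum_sub_distrib, sum_es]
  have hk : (∑ u, (C u : ℤ)) - 1 = (∑ v, (C₂ v : ℤ)) + k := by
    have := eqn_deg hf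
    rw [hdeg] at this
    linarith
  -- k ≤ -1
  have hkneg : k ≤ -1 := by
    by_contra hge
    push_neg at hge
    have hk0 : 0 ≤ k := by omega
    have hEeff : ∀ u, 0 ≤ (C₂ u : ℤ) + k * es t u := by
      intro u
      have h1 : (0:ℤ) ≤ (C₂ u : ℤ) := Int.natCast_nonneg _
      have h2 : (0:ℤ) ≤ es t u := by
        unfold es
        by_cases h : u = t
        · rw [if_pos h]; norm_num
        · rw [if_neg h]
      nlinarith
    have hfeq : ∀ u, (C₂ u : ℤ) + k * es t u
        = (C u : ℤ) + (-1) * es s u + lap G (fun v => -(f v)) u := by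
      intro u
      have h1 := hf u
      have h2 : lap G (fun v => -(f v)) u = -(lap G f u) := lap_neg G f u
      rw [h2]
      unfold divM at h1
      linarith
    have := red_eff hEeff hC hCs hfeq
    omega
  -- degree bounds
  have hn1 : ∑ u ∈ Finset.univ.erase t, (C₂ u + 1)
      = (∑ u, C₂ u) + (Fintype.card V - 1) := gsum_eq C₂ hC₂t
  have hn2 : (∑ u, C u) + (Fintype.card V - 1) = Fintype.card E := by
    rw [← gsum_eq C hCs]; exact hgs
  have hb := sum_bound hP₂
  rw [hn1] at hb
  have hcastle : (∑ u, (C u : ℤ)) ≤ (∑ u, (C₂ u : ℤ)) := by omega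
  have hle2 : (∑ u, C u) ≤ (∑ u, C₂ u) := by
    have hc1 : ((∑ u, C u : ℕ) : ℤ) = ∑ u, (C u : ℤ) := by push_cast; rfl
    have hc2 : ((∑ u, C₂ u : ℕ) : ℤ) = ∑ u, (C₂ u : ℤ) := by push_cast; rfl
    have := hcastle
    rw [← hc1, ← hc2] at this
    exact_mod_cast this
  have hsums : (∑ u, C₂ u) = ∑ u, C u := by omega
  have hkeq : k = -1 := by
    have hc1 : ((∑ u, C u : ℕ) : ℤ) = ∑ u, (C u : ℤ) := by push_cast; rfl
    have hc2 : ((∑ u, C₂ u : ℕ) : ℤ) = ∑ u, (C₂ u : ℤ) := by push_cast; rfl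
    have : (∑ u, (C₂ u : ℤ)) = ∑ u, (C u : ℤ) := by
      rw [← hc1, ← hc2]
      exact_mod_cast hsums
    omega
  constructor
  · rw [hn1, hsums]
    exact hn2
  · refine ⟨hC, hCs, ⟨-1, fun v => -(f v), fun u => ?_⟩⟩
    have h1 := hf u
    have h2 : lap G (fun v => -(f v)) u = -(lap G f u) := lap_neg G f u
    rw [h2]
    unfold divM at h1 ⊢
    rw [hkeq] at h1
    linarith

end PFAux
namespace PFAux

open Finset

variable {V E : Type*} [Fintype V] [DecidableEq V] [Fintype E]

noncomputable def pmap {G : MG V E} (hG : G.adjGraph.Connected) (s t : V) (C : V → ℕ) :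
    V → ℕ :=
  Classical.choose (red_exists hG t (divP s C))

lemma pmap_spec {G : MG V E} (hG : G.adjGraph.Connected) (s t : V) (C : V → ℕ) :
    RedOf G t (divP s C) (pmap hG s t C) :=
  Classical.choose_spec (red_exists hG t (divP s C))

noncomputable def parkEquiv {G : MG V E} (hG : G.adjGraph.Connected) (s t : V) :
    {C : V → ℕ // Park G s C ∧ C s = 0} ≃ {C : V → ℕ // Park G t C ∧ C t = 0} where
  toFun := fun C => ⟨pmap hG s t C.1,
    (pmap_spec hG s t C.1).1, (pmap_spec hG s t C.1).2.1⟩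
  invFun := fun C => ⟨pmap hG t s C.1,
    (pmap_spec hG t s C.1).1, (pmap_spec hG t s C.1).2.1⟩
  left_inv := by
    rintro ⟨C, hC1, hC2⟩
    apply Subtype.ext
    have h1 := pmap_spec hG s t C
    have h2 := redP_flip hC1 hC2 h1
    have h3 := pmap_spec hG t s (pmap hG s t C)
    exact red_unique h3 h2
  right_inv := by
    rintro ⟨C, hC1, hC2⟩
    apply Subtype.ext
    have h1 := pmap_spec hG t s C
    have h2 := redP_flip hC1 hC2 h1
    have h3 := pmap_spec hG s t (pmap hG t s C)
    exact red_unique h3 h2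

noncomputable def mmap {G : MG V E} (hG : G.adjGraph.Connected) (s t : V) (C : V → ℕ) :
    V → ℕ :=
  Classical.choose (red_exists hG t (divM s C))

lemma mmap_spec {G : MG V E} (hG : G.adjGraph.Connected) (s t : V) (C : V → ℕ) :
    RedOf G t (divM s C) (mmap hG s t C) :=
  Classical.choose_spec (red_exists hG t (divM s C))

noncomputable def maxParkEquiv {G : MG V E} (hG : G.adjGraph.Connected) (s t : V) :
    {C : V → ℕ // Park G s C ∧ C s = 0 ∧
        ∑ u ∈ Finset.univ.erase s, (C u + 1) = Fintype.card E}
      ≃ {C : V → ℕ // Park G t C ∧ C t = 0 ∧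
        ∑ u ∈ Finset.univ.erase t, (C u + 1) = Fintype.card E} where
  toFun := fun C =>
    ⟨mmap hG s t C.1, (mmap_spec hG s t C.1).1, (mmap_spec hG s t C.1).2.1,
      (redM_flip C.2.1 C.2.2.1 C.2.2.2 (mmap_spec hG s t C.1)).1⟩
  invFun := fun C =>
    ⟨mmap hG t s C.1, (mmap_spec hG t s C.1).1, (mmap_spec hG t s C.1).2.1,
      (redM_flip C.2.1 C.2.2.1 C.2.2.2 (mmap_spec hG t s C.1)).1⟩
  left_inv := by
    rintro ⟨C, hC1, hC2, hC3⟩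
    apply Subtype.ext
    have h1 := mmap_spec hG s t C
    have h2 := (redM_flip hC1 hC2 hC3 h1).2
    have h3 := mmap_spec hG t s (mmap hG s t C)
    exact red_unique h3 h2
  right_inv := by
    rintro ⟨C, hC1, hC2, hC3⟩
    apply Subtype.ext
    have h1 := mmap_spec hG t s C
    have h2 := (redM_flip hC1 hC2 hC3 h1).2
    have h3 := mmap_spec hG s t (mmap hG t s C)
    exact red_unique h3 h2

/-- Extend a configuration on `V ∖ {s}` by `0` at `s`. -/
noncomputable def extFun (s : V) (c : {v : V // v ≠ s} → ℕ) : V → ℕ :=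
  fun v => if h : v = s then 0 else c ⟨v, h⟩

lemma extFun_sink (s : V) (c : {v : V // v ≠ s} → ℕ) : extFun s c s = 0 := by
  rw [extFun, dif_pos rfl]

lemma extFun_ne (s : V) (c : {v : V // v ≠ s} → ℕ) {v : V} (h : v ≠ s) :
    extFun s c v = c ⟨v, h⟩ := by
  rw [extFun, dif_neg h]

lemma extFun_restrict {s : V} (C : V → ℕ) (hCs : C s = 0) :
    extFun s (fun v => C v.1) = C := by
  funext v
  by_cases h : v = s
  · rw [h, extFun_sink, hCs]
  · rw [extFun_ne s _ h]

lemma isParking_iff_park (G : MG V E) (s : V) (c : {v : V // v ≠ s} → ℕ) :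
    IsParking G s c ↔ Park G s (extFun s c) := by
  constructor
  · intro h U hU hsU
    obtain ⟨u, hu, hne, hlt⟩ := h U hU hsU
    exact ⟨u, hu, by rw [extFun_ne s c hne]; exact hlt⟩
  · intro h U hU hsU
    obtain ⟨u, hu, hlt⟩ := h U hU hsU
    have hne : u ≠ s := fun he => hsU (he ▸ hu)
    exact ⟨u, hu, hne, by rw [← extFun_ne s c hne]; exact hlt⟩

lemma isParking_restrict (G : MG V E) (s : V) (C : V → ℕ) (hp : Park G s C) (hCs : C s = 0) :
    IsParking G s (fun v => C v.1) := by
  rw [isParking_iff_park, extFun_restrict C hCs]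
  exact hp

noncomputable def stEquiv (G : MG V E) (s : V) :
    {c : {v : V // v ≠ s} → ℕ // IsParking G s c}
      ≃ {C : V → ℕ // Park G s C ∧ C s = 0} where
  toFun := fun c => ⟨extFun s c.1, (isParking_iff_park G s c.1).mp c.2, extFun_sink s c.1⟩
  invFun := fun C => ⟨fun v => C.1 v.1, isParking_restrict G s C.1 C.2.1 C.2.2⟩
  left_inv := by
    rintro ⟨c, hc⟩
    apply Subtype.ext
    funext v
    exact extFun_ne s c v.2
  right_inv := by
    rintro ⟨C, hC1, hC2⟩
    apply Subtype.ext
    exact extFun_restrict C hC2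

lemma isMaxParking_iff (G : MG V E) (s : V) (c : {v : V // v ≠ s} → ℕ) :
    IsMaxParking G s c ↔ MaxPark G s (extFun s c) := by
  constructor
  · rintro ⟨hp, hmax⟩
    refine ⟨(isParking_iff_park G s c).mp hp, extFun_sink s c, ?_⟩
    intro C' hp' hs' hle
    have hc' : IsParking G s (fun v => C' v.1) := isParking_restrict G s C' hp' hs'
    have hlec : c ≤ fun v => C' v.1 := by
      intro v
      have := hle v.1
      rw [extFun_ne s c v.2] at this
      exact this
    have heq := hmax _ hc' hlec
    rw [← extFun_restrict C' hs', ← heq]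
  · rintro ⟨hp, hs0, hmax⟩
    refine ⟨(isParking_iff_park G s c).mpr hp, ?_⟩
    intro c' hc' hle
    have hp' : Park G s (extFun s c') := (isParking_iff_park G s c').mp hc'
    have hle' : ∀ u, extFun s c u ≤ extFun s c' u := by
      intro u
      by_cases h : u = s
      · rw [h, extFun_sink, extFun_sink]
      · rw [extFun_ne s c h, extFun_ne s c' h]
        exact hle ⟨u, h⟩
    have heq := hmax _ hp' (extFun_sink s c') hle'
    funext v
    have := congrFun heq v.1
    rw [extFun_ne s c' v.2, extFun_ne s c v.2] at this
    exact this

noncomputable def stMaxEquiv (G : MG V E) (s : V) :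
    {c : {v : V // v ≠ s} → ℕ // IsMaxParking G s c}
      ≃ {C : V → ℕ // Park G s C ∧ C s = 0 ∧
          ∑ u ∈ Finset.univ.erase s, (C u + 1) = Fintype.card E} where
  toFun := fun c =>
    ⟨extFun s c.1, (maxPark_iff G s (extFun s c.1)).mp ((isMaxParking_iff G s c.1).mp c.2)⟩
  invFun := fun C => ⟨fun v => C.1 v.1, by
    have hm : MaxPark G s C.1 := (maxPark_iff G s C.1).mpr C.2
    refine (isMaxParking_iff G s _).mpr ?_
    rw [extFun_restrict C.1 C.2.2.1]
    exact hm⟩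
  left_inv := by
    rintro ⟨c, hc⟩
    apply Subtype.ext
    funext v
    exact extFun_ne s c v.2
  right_inv := by
    rintro ⟨C, hC⟩
    apply Subtype.ext
    exact extFun_restrict C hC.2.1

end PFAux
/-- The number of `G`-parking functions, and the number of maximal `G`-parking
functions, do not depend on the choice of sink. -/
theorem stmt_12 (G : MG V E) (hG : G.adjGraph.Connected) (s t : V) :
    Nat.card {c : {v : V // v ≠ s} → ℕ // IsParking G s c} =
      Nat.card {c : {v : V // v ≠ t} → ℕ // IsParking G t c} ∧
    Nat.card {c : {v : V // v ≠ s} → ℕ // IsMaxParking G s c} =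
      Nat.card {c : {v : V // v ≠ t} → ℕ // IsMaxParking G t c} := by
  constructor
  · exact Nat.card_congr
      (((PFAux.stEquiv G s).trans (PFAux.parkEquiv hG s t)).trans (PFAux.stEquiv G t).symm)
  · exact Nat.card_congr
      (((PFAux.stMaxEquiv G s).trans (PFAux.maxParkEquiv hG s t)).trans
        (PFAux.stMaxEquiv G t).symm)
end
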